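/- In a finite-dimensional sequential product space, the sharp effects form a lattice: for sharp effects p and q, the join p ∨ q = ⌈(p+q)/2⌉ and the meet p ∧ q = 1 - ((1-p) ∨ (1-q)) exist, where ⌈·⌉ denotes the least sharp effect above a given effect. -/
import Mathlib


open scoped BigOperators

/-- A sequential product space: an order unit space `(V, ≤, unit)` with a binary
operation `seq` on its effects satisfying axioms (S1)-(S7). -/
structure SPS (V : Type*) [NormedAddCommGroup V] [NormedSpace ℝ V] [PartialOrder V] where
  unit : V
  seq : V → V → V
  /-- The effects: elements `a` with `0 ≤ a ≤ unit`. -/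
  Eff : V → Prop
  eff_iff : ∀ a : V, Eff a ↔ 0 ≤ a ∧ a ≤ unit
  eff_unit : Eff unit
  /-- `V` is an ordered vector space. -/
  add_le_add_right' : ∀ a b c : V, a ≤ b → a + c ≤ b + c
  smul_le_smul' : ∀ (r : ℝ) (a b : V), 0 ≤ r → a ≤ b → r • a ≤ r • b
  /-- `unit` is a strong unit. -/
  strong : ∀ a : V, ∃ n : ℕ, -((n : ℝ) • unit) ≤ a ∧ a ≤ (n : ℝ) • unit
  /-- Archimedean property. -/
  arch : ∀ a : V, (∀ n : ℕ, a ≤ ((n : ℝ) + 1)⁻¹ • unit) → a ≤ 0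
  /-- The norm of `V` is the order-unit norm. -/
  norm_def : ∀ a : V, ‖a‖ = sInf {r : ℝ | 0 ≤ r ∧ -(r • unit) ≤ a ∧ a ≤ r • unit}
  seq_eff : ∀ a b : V, Eff a → Eff b → Eff (seq a b)
  /-- (S1) additivity in the second argument. -/
  s1 : ∀ a b c : V, Eff a → Eff b → Eff c → Eff (b + c) →
      seq a (b + c) = seq a b + seq a c
  /-- (S2) norm-continuity in the first argument. -/
  s2 : ∀ b : V, Eff b → ContinuousOn (fun a => seq a b) {a : V | Eff a}
  /-- (S3) unitality. -/
  s3 : ∀ a : V, Eff a → seq unit a = a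
  /-- (S4) orthogonal effects are compatible. -/
  s4 : ∀ a b : V, Eff a → Eff b → seq a b = 0 → seq b a = 0
  /-- (S5) associativity for compatible effects. -/
  s5 : ∀ a b c : V, Eff a → Eff b → Eff c → seq a b = seq b a →
      seq a (seq b c) = seq (seq a b) c
  /-- (S6) compatibility is preserved by complements. -/
  s6a : ∀ a b : V, Eff a → Eff b → seq a b = seq b a →
      seq a (unit - b) = seq (unit - b) a
  /-- (S6) compatibility is preserved by sums. -/
  s6b : ∀ a b c : V, Eff a → Eff b → Eff c → Eff (b + c) →
      seq a b = seq b a → seq a c = seq c a → seq a (b + c) = seq (b + c) a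
  /-- (S7) compatibility is preserved by the product. -/
  s7 : ∀ a b c : V, Eff a → Eff b → Eff c →
      seq a b = seq b a → seq a c = seq c a → seq a (seq b c) = seq (seq b c) a

namespace SPS

variable {V : Type*} [NormedAddCommGroup V] [NormedSpace ℝ V] [PartialOrder V]

/-- `a` and `b` are compatible: `a & b = b & a`. -/
def Compat (S : SPS V) (a b : V) : Prop := S.seq a b = S.seq b a

/-- An effect `p` is sharp when the only effect below both `p` and `unit - p` is `0`. -/
def Sharp (S : SPS V) (p : V) : Prop :=
  S.Eff p ∧ ∀ b : V, S.Eff b → b ≤ p → b ≤ S.unit - p → b = 0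

/-- An effect `p` is sharp (idempotence formulation): `p & p = p`. -/
def SharpI (S : SPS V) (p : V) : Prop := S.Eff p ∧ S.seq p p = p

/-- An effect `p` is atomic when `p ≠ 0` and every effect below `p` is a multiple of `p`. -/
def Atomic (S : SPS V) (p : V) : Prop :=
  S.Eff p ∧ p ≠ 0 ∧ ∀ a : V, S.Eff a → a ≤ p → ∃ t : ℝ, 0 ≤ t ∧ t ≤ 1 ∧ a = t • p

/-- `c` is the least sharp effect above `a` (the ceiling `⌈a⌉`). -/
def IsCeil (S : SPS V) (a c : V) : Prop :=
  S.SharpI c ∧ a ≤ c ∧ ∀ d : V, S.SharpI d → a ≤ d → c ≤ d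

/-- `f` is the greatest sharp effect below `a` (the floor `⌊a⌋`). -/
def IsFloor (S : SPS V) (a f : V) : Prop :=
  S.SharpI f ∧ f ≤ a ∧ ∀ d : V, S.SharpI d → d ≤ a → d ≤ f

end SPS

namespace SPS

open Filter Topology

variable {V : Type*} [NormedAddCommGroup V] [NormedSpace ℝ V] [PartialOrder V]
variable (S : SPS V)
include S

/-! ### Order basics -/

lemma le_iff' {a b : V} : a ≤ b ↔ 0 ≤ b - a := by
  constructor
  · intro h
    have := S.add_le_add_right' a b (-a) h
    simpa [sub_eq_add_neg] using this
  · intro h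
    have := S.add_le_add_right' 0 (b - a) a h
    simpa using this

lemma add_le_add'' {a b c d : V} (h1 : a ≤ b) (h2 : c ≤ d) : a + c ≤ b + d := by
  calc a + c ≤ b + c := S.add_le_add_right' a b c h1
    _ = c + b := add_comm _ _
    _ ≤ d + b := S.add_le_add_right' c d b h2
    _ = b + d := add_comm _ _

lemma add_nonneg' {a b : V} (ha : 0 ≤ a) (hb : 0 ≤ b) : 0 ≤ a + b := by
  simpa using S.add_le_add'' ha hb

lemma smul_nonneg' {r : ℝ} {a : V} (hr : 0 ≤ r) (ha : 0 ≤ a) : 0 ≤ r • a := by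
  simpa using S.smul_le_smul' r 0 a hr ha

lemma neg_le_neg' {a b : V} (h : a ≤ b) : -b ≤ -a := by
  rw [S.le_iff']
  have e : -a - -b = b - a := by abel
  rw [e]
  exact (S.le_iff').1 h

lemma unit_nonneg : (0 : V) ≤ S.unit := ((S.eff_iff _).1 S.eff_unit).1

lemma smul_unit_mono {r s : ℝ} (h : r ≤ s) : r • S.unit ≤ s • S.unit := by
  rw [S.le_iff']
  have e : s • S.unit - r • S.unit = (s - r) • S.unit := by module
  rw [e]
  exact S.smul_nonneg' (by linarith) S.unit_nonneg

lemma eff_def {a : V} (h : S.Eff a) : 0 ≤ a ∧ a ≤ S.unit := (S.eff_iff a).1 h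

lemma eff_of {a : V} (h1 : 0 ≤ a) (h2 : a ≤ S.unit) : S.Eff a := (S.eff_iff a).2 ⟨h1, h2⟩

lemma eff_zero : S.Eff 0 := S.eff_of le_rfl S.unit_nonneg

lemma eff_sub {a : V} (h : S.Eff a) : S.Eff (S.unit - a) := by
  obtain ⟨h1, h2⟩ := S.eff_def h
  refine S.eff_of ((S.le_iff').1 h2) ?_
  rw [S.le_iff']
  have e : S.unit - (S.unit - a) = a := by abel
  rw [e]; exact h1

lemma eff_sub_of_le {b c : V} (hb : 0 ≤ b) (hc : S.Eff c) (h : b ≤ c) : S.Eff (c - b) := by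
  refine S.eff_of ((S.le_iff').1 h) ?_
  have h1 : c - b ≤ c := by
    rw [S.le_iff']
    have e : c - (c - b) = b := by abel
    rw [e]; exact hb
  exact h1.trans (S.eff_def hc).2

lemma sub_le_comm' {x y : V} : S.unit - x ≤ y ↔ S.unit - y ≤ x := by
  constructor <;> intro h
  · rw [S.le_iff']
    have e : x - (S.unit - y) = y - (S.unit - x) := by abel
    rw [e]; exact (S.le_iff').1 h
  · rw [S.le_iff']
    have e : y - (S.unit - x) = x - (S.unit - y) := by abel
    rw [e]; exact (S.le_iff').1 h

/-! ### Norm facts -/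

lemma norm_le_of {a : V} {t : ℝ} (ht : 0 ≤ t) (h1 : -(t • S.unit) ≤ a) (h2 : a ≤ t • S.unit) :
    ‖a‖ ≤ t := by
  rw [S.norm_def]
  exact csInf_le ⟨0, fun r hr => hr.1⟩ ⟨ht, h1, h2⟩

lemma norm_le_of_nonneg {a : V} {t : ℝ} (ht : 0 ≤ t) (h0 : 0 ≤ a) (h2 : a ≤ t • S.unit) :
    ‖a‖ ≤ t := by
  refine S.norm_le_of ht (le_trans ?_ h0) h2
  have : (0 : V) ≤ t • S.unit := S.smul_nonneg' ht S.unit_nonneg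
  simpa using S.neg_le_neg' this

lemma le_norm_smul {a : V} {ε : ℝ} (hε : 0 < ε) :
    -((‖a‖ + ε) • S.unit) ≤ a ∧ a ≤ (‖a‖ + ε) • S.unit := by
  set T : Set ℝ := {r : ℝ | 0 ≤ r ∧ -(r • S.unit) ≤ a ∧ a ≤ r • S.unit} with hT
  have hne : T.Nonempty := by
    obtain ⟨n, h1, h2⟩ := S.strong a
    exact ⟨n, Nat.cast_nonneg n, h1, h2⟩
  have hlt : sInf T < ‖a‖ + ε := by
    have : sInf T = ‖a‖ := (S.norm_def a).symm
    rw [this]; linarith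
  obtain ⟨r, hr, hrlt⟩ := exists_lt_of_csInf_lt hne hlt
  refine ⟨le_trans ?_ hr.2.1, hr.2.2.trans (S.smul_unit_mono hrlt.le)⟩
  exact S.neg_le_neg' (S.smul_unit_mono hrlt.le)

/-! ### Limits and order -/

lemma nonpos_of_forall_le {a : V} (h : ∀ ε : ℝ, 0 < ε → a ≤ ε • S.unit) : a ≤ 0 := by
  apply S.arch
  intro n
  exact h _ (by positivity)

lemma nonneg_of_tendsto {x : ℕ → V} {l : V} (hx : Tendsto x atTop (𝓝 l))
    (h : ∀ᶠ n in atTop, 0 ≤ x n) : 0 ≤ l := by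
  have hneg : -l ≤ 0 := by
    apply S.nonpos_of_forall_le
    intro ε hε
    obtain ⟨N, hN⟩ := Metric.tendsto_atTop.1 hx (ε / 2) (half_pos hε)
    obtain ⟨n, hn1, hn2⟩ := (h.and (eventually_atTop.2 ⟨N, fun m hm => hN m hm⟩)).exists
    have hnorm : ‖x n - l‖ < ε / 2 := by rwa [dist_eq_norm] at hn2
    have e1 : -l ≤ x n - l := by
      rw [S.le_iff']
      have e : x n - l - -l = x n := by abel
      rw [e]; exact hn1
    have e2 := (S.le_norm_smul (a := x n - l) (half_pos hε)).2
    have e3 : (‖x n - l‖ + ε / 2) • S.unit ≤ ε • S.unit := S.smul_unit_mono (by linarith)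
    exact e1.trans (e2.trans e3)
  have := S.add_le_add_right' (-l) 0 l hneg
  simpa using this

lemma le_of_tendsto'' {x : ℕ → V} {l c : V} (hx : Tendsto x atTop (𝓝 l))
    (h : ∀ᶠ n in atTop, c ≤ x n) : c ≤ l := by
  rw [S.le_iff']
  exact S.nonneg_of_tendsto (hx.sub tendsto_const_nhds)
    (h.mono fun n hn => (S.le_iff').1 hn)

lemma ge_of_tendsto'' {x : ℕ → V} {l c : V} (hx : Tendsto x atTop (𝓝 l))
    (h : ∀ᶠ n in atTop, x n ≤ c) : l ≤ c := by
  rw [S.le_iff']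
  exact S.nonneg_of_tendsto (tendsto_const_nhds.sub hx)
    (h.mono fun n hn => (S.le_iff').1 hn)

/-! ### Basic sequential product lemmas -/

lemma seq_zero' {a : V} (ha : S.Eff a) : S.seq a 0 = 0 := by
  have h := S.s1 a 0 0 ha S.eff_zero S.eff_zero (by simpa using S.eff_zero)
  rw [add_zero] at h
  exact (left_eq_add.mp h)

lemma zero_seq' {a : V} (ha : S.Eff a) : S.seq 0 a = 0 :=
  S.s4 a 0 ha S.eff_zero (S.seq_zero' ha)

lemma seq_unit' {a : V} (ha : S.Eff a) : S.seq a S.unit = a := by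
  have h := S.s6a a 0 ha S.eff_zero (by rw [S.seq_zero' ha, S.zero_seq' ha])
  rw [sub_zero] at h
  rw [h, S.s3 a ha]

lemma seq_nonneg {a b : V} (ha : S.Eff a) (hb : S.Eff b) : 0 ≤ S.seq a b :=
  (S.eff_def (S.seq_eff a b ha hb)).1

lemma seq_mono {a b c : V} (ha : S.Eff a) (hb : S.Eff b) (hc : S.Eff c) (h : b ≤ c) :
    S.seq a b ≤ S.seq a c := by
  have hcb := S.eff_sub_of_le (S.eff_def hb).1 hc h
  have e : b + (c - b) = c := by abel
  have h1 := S.s1 a b (c - b) ha hb hcb (by rw [e]; exact hc)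
  rw [e] at h1
  rw [h1, S.le_iff']
  have e2 : S.seq a b + S.seq a (c - b) - S.seq a b = S.seq a (c - b) := by abel
  rw [e2]
  exact S.seq_nonneg ha hcb

lemma seq_le_fst {a b : V} (ha : S.Eff a) (hb : S.Eff b) : S.seq a b ≤ a := by
  have := S.seq_mono ha hb S.eff_unit (S.eff_def hb).2
  rwa [S.seq_unit' ha] at this

lemma eff_half {b : V} (hb : S.Eff b) : S.Eff ((2⁻¹ : ℝ) • b) := by
  refine S.eff_of (S.smul_nonneg' (by norm_num) (S.eff_def hb).1) ?_
  have h1 : (2⁻¹ : ℝ) • b ≤ b := by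
    rw [S.le_iff']
    have e : b - (2⁻¹ : ℝ) • b = (2⁻¹ : ℝ) • b := by module
    rw [e]
    exact S.smul_nonneg' (by norm_num) (S.eff_def hb).1
  exact h1.trans (S.eff_def hb).2

lemma seq_half {a b : V} (ha : S.Eff a) (hb : S.Eff b) :
    S.seq a ((2⁻¹ : ℝ) • b) = (2⁻¹ : ℝ) • S.seq a b := by
  have hsum : (2⁻¹ : ℝ) • b + (2⁻¹ : ℝ) • b = b := by module
  have h := S.s1 a ((2⁻¹ : ℝ) • b) ((2⁻¹ : ℝ) • b) ha (S.eff_half hb) (S.eff_half hb)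
    (by rw [hsum]; exact hb)
  rw [hsum] at h
  rw [h]
  module

lemma eff_dyadic (k : ℕ) {b : V} (hb : S.Eff b) : S.Eff (((2 : ℝ)⁻¹) ^ k • b) := by
  induction k with
  | zero => simpa using hb
  | succ k ih =>
    have e : ((2 : ℝ)⁻¹) ^ (k + 1) • b = (2⁻¹ : ℝ) • (((2 : ℝ)⁻¹) ^ k • b) := by
      rw [smul_smul]; ring_nf
    rw [e]
    exact S.eff_half ih

lemma seq_dyadic (k : ℕ) {a b : V} (ha : S.Eff a) (hb : S.Eff b) :
    S.seq a (((2 : ℝ)⁻¹) ^ k • b) = ((2 : ℝ)⁻¹) ^ k • S.seq a b := by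
  induction k with
  | zero => simp
  | succ k ih =>
    have e : ((2 : ℝ)⁻¹) ^ (k + 1) • b = (2⁻¹ : ℝ) • (((2 : ℝ)⁻¹) ^ k • b) := by
      rw [smul_smul]; ring_nf
    rw [e, S.seq_half ha (S.eff_dyadic k hb), ih, smul_smul]
    ring_nf

lemma seq_small {a c : V} (ha : S.Eff a) (hc : S.Eff c) (k : ℕ)
    (h : c ≤ ((2 : ℝ)⁻¹) ^ k • S.unit) : S.seq a c ≤ ((2 : ℝ)⁻¹) ^ k • S.unit := by
  have hu : S.Eff (((2 : ℝ)⁻¹) ^ k • S.unit) := S.eff_dyadic k S.eff_unit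
  calc S.seq a c ≤ S.seq a (((2 : ℝ)⁻¹) ^ k • S.unit) := S.seq_mono ha hc hu h
    _ = ((2 : ℝ)⁻¹) ^ k • S.seq a S.unit := S.seq_dyadic k ha S.eff_unit
    _ = ((2 : ℝ)⁻¹) ^ k • a := by rw [S.seq_unit' ha]
    _ ≤ ((2 : ℝ)⁻¹) ^ k • S.unit := S.smul_le_smul' _ _ _ (by positivity) (S.eff_def ha).2

/-! ### Sharp effect lemmas -/

lemma seq_compl_self {p : V} (hp : S.SharpI p) : S.seq p (S.unit - p) = 0 := by
  have e : p + (S.unit - p) = S.unit := by abel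
  have h := S.s1 p p (S.unit - p) hp.1 hp.1 (S.eff_sub hp.1) (by rw [e]; exact S.eff_unit)
  rw [e, S.seq_unit' hp.1, hp.2] at h
  exact (left_eq_add.mp h)

lemma sharp_compl {p : V} (hp : S.SharpI p) : S.SharpI (S.unit - p) := by
  have h0 : S.seq (S.unit - p) p = 0 := S.s4 _ _ hp.1 (S.eff_sub hp.1) (S.seq_compl_self hp)
  refine ⟨S.eff_sub hp.1, ?_⟩
  have e : p + (S.unit - p) = S.unit := by abel
  have h := S.s1 (S.unit - p) p (S.unit - p) (S.eff_sub hp.1) hp.1 (S.eff_sub hp.1)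
    (by rw [e]; exact S.eff_unit)
  rw [e, S.seq_unit' (S.eff_sub hp.1), h0, zero_add] at h
  exact h.symm

lemma seq_absorb {p b : V} (hp : S.SharpI p) (hb : S.Eff b) (h : p ≤ b) :
    S.seq b p = p ∧ S.seq p b = p := by
  have h1 : S.unit - b ≤ S.unit - p := by
    rw [S.le_iff']
    have e : S.unit - p - (S.unit - b) = b - p := by abel
    rw [e]
    exact (S.le_iff').1 h
  have h2 : S.seq p (S.unit - b) ≤ S.seq p (S.unit - p) :=
    S.seq_mono hp.1 (S.eff_sub hb) (S.eff_sub hp.1) h1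
  have h3 : S.seq p (S.unit - b) = 0 :=
    le_antisymm (h2.trans_eq (S.seq_compl_self hp)) (S.seq_nonneg hp.1 (S.eff_sub hb))
  have h4 : S.seq (S.unit - b) p = 0 := S.s4 _ _ hp.1 (S.eff_sub hb) h3
  have e : b + (S.unit - b) = S.unit := by abel
  have h5 := S.s1 p b (S.unit - b) hp.1 hb (S.eff_sub hb) (by rw [e]; exact S.eff_unit)
  rw [e, S.seq_unit' hp.1, h3, add_zero] at h5
  have h6 : S.Compat p (S.unit - b) := by unfold Compat; rw [h3, h4]
  have h7 := S.s6a p (S.unit - b) hp.1 (S.eff_sub hb) h6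
  have e2 : S.unit - (S.unit - b) = b := by abel
  rw [e2] at h7
  exact ⟨by rw [← h7, ← h5], h5.symm⟩

lemma eff_half_add {p q : V} (hp : S.Eff p) (hq : S.Eff q) : S.Eff ((2⁻¹ : ℝ) • (p + q)) := by
  refine S.eff_of (S.smul_nonneg' (by norm_num) (S.add_nonneg' (S.eff_def hp).1 (S.eff_def hq).1)) ?_
  have h1 : p + q ≤ S.unit + S.unit := S.add_le_add'' (S.eff_def hp).2 (S.eff_def hq).2
  have h2 := S.smul_le_smul' (2⁻¹ : ℝ) _ _ (by norm_num) h1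
  have e : (2⁻¹ : ℝ) • (S.unit + S.unit) = S.unit := by module
  rwa [e] at h2

/-- Key lemma: if `(p+q)/2 ≤ r` with `r` sharp, then `p ≤ r`. -/
lemma le_sharp_of_half_add_le {r p q : V} (hr : S.SharpI r) (hp : S.Eff p) (hq : S.Eff q)
    (h : (2⁻¹ : ℝ) • (p + q) ≤ r) : p ≤ r := by
  set c := S.unit - r with hc
  have hcs : S.SharpI c := S.sharp_compl hr
  have hEc : S.Eff c := hcs.1
  have ha : S.Eff ((2⁻¹ : ℝ) • (p + q)) := S.eff_half_add hp hq
  have e1 : S.unit - c = r := by rw [hc]; abel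
  -- seq c a = 0
  have h2 : S.seq c ((2⁻¹ : ℝ) • (p + q)) ≤ S.seq c r := S.seq_mono hEc ha hr.1 h
  have h3 : S.seq c r = 0 := by
    have := S.seq_compl_self hcs
    rwa [e1] at this
  have h4 : S.seq c ((2⁻¹ : ℝ) • (p + q)) = 0 :=
    le_antisymm (h2.trans_eq h3) (S.seq_nonneg hEc ha)
  -- split into the two halves
  have e2 : (2⁻¹ : ℝ) • (p + q) = (2⁻¹ : ℝ) • p + (2⁻¹ : ℝ) • q := by module
  have h5 := S.s1 c ((2⁻¹ : ℝ) • p) ((2⁻¹ : ℝ) • q) hEc (S.eff_half hp) (S.eff_half hq)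
    (by rw [← e2]; exact ha)
  rw [← e2, h4] at h5
  have h6 : S.seq c ((2⁻¹ : ℝ) • p) = 0 := by
    have hx := S.seq_nonneg hEc (S.eff_half hp)
    have hy := S.seq_nonneg hEc (S.eff_half hq)
    have hle : S.seq c ((2⁻¹ : ℝ) • p) ≤ 0 := by
      have := S.add_le_add_right' 0 (S.seq c ((2⁻¹ : ℝ) • q)) (S.seq c ((2⁻¹ : ℝ) • p)) hy
      rw [zero_add, add_comm (S.seq c ((2⁻¹ : ℝ) • q)) (S.seq c ((2⁻¹ : ℝ) • p)), ← h5] at this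
      -- this : seq c (2⁻¹ p) ≤ 0
      exact this
    exact le_antisymm hle hx
  have h7 : S.seq c p = 0 := by
    have hh := S.seq_half hEc hp
    rw [h6] at hh
    rcases smul_eq_zero.mp hh.symm with h | h
    · norm_num at h
    · exact h
  -- now p commutes with r and seq r p = p
  have h8 : S.seq p c = 0 := S.s4 _ _ hEc hp h7
  have h9 : S.Compat p c := by unfold Compat; rw [h7, h8]
  have h10 := S.s6a p c hp hEc h9
  rw [e1] at h10
  -- h10 : seq p r = seq r p
  have e3 : c + r = S.unit := by rw [hc]; abel
  have h11 := S.s1 p c r hp hEc hr.1 (by rw [e3]; exact S.eff_unit)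
  rw [e3, S.seq_unit' hp, h8, zero_add] at h11
  -- h11 : p = seq p r
  have h12 : S.seq r p = p := by rw [← h10, ← h11]
  calc p = S.seq r p := h12.symm
    _ ≤ r := S.seq_le_fst hr.1 hp

/-! ### Powers -/

def pw (b : V) : ℕ → V
  | 0 => b
  | n + 1 => S.seq b (pw b n)

@[simp] lemma pw_zero (b : V) : S.pw b 0 = b := rfl

@[simp] lemma pw_succ (b : V) (n : ℕ) : S.pw b (n + 1) = S.seq b (S.pw b n) := rfl

lemma pw_eff {b : V} (hb : S.Eff b) : ∀ n, S.Eff (S.pw b n) := by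
  intro n
  induction n with
  | zero => simpa using hb
  | succ n ih => rw [S.pw_succ]; exact S.seq_eff _ _ hb ih

lemma pw_compat {b : V} (hb : S.Eff b) : ∀ n, S.Compat b (S.pw b n) := by
  intro n
  induction n with
  | zero => rw [S.pw_zero]; rfl
  | succ n ih =>
    rw [S.pw_succ]
    exact S.s7 b b (S.pw b n) hb hb (S.pw_eff hb n) rfl ih

lemma pw_add {b : V} (hb : S.Eff b) : ∀ m n, S.seq (S.pw b m) (S.pw b n) = S.pw b (m + n + 1) := by
  intro m
  induction m with
  | zero =>
    intro n
    rw [S.pw_zero, show 0 + n + 1 = n + 1 from by omega, S.pw_succ]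
  | succ m ih =>
    intro n
    rw [S.pw_succ, ← S.s5 b (S.pw b m) (S.pw b n) hb (S.pw_eff hb m) (S.pw_eff hb n)
      (S.pw_compat hb m), ih n, ← S.pw_succ, show m + n + 1 + 1 = m + 1 + n + 1 from by omega]

lemma pw_succ_le {b : V} (hb : S.Eff b) : ∀ n, S.pw b (n + 1) ≤ S.pw b n := by
  intro n
  induction n with
  | zero =>
    rw [S.pw_succ, S.pw_zero]
    exact S.seq_le_fst hb hb
  | succ n ih =>
    rw [S.pw_succ b (n + 1)]
    calc S.seq b (S.pw b (n + 1)) ≤ S.seq b (S.pw b n) :=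
          S.seq_mono hb (S.pw_eff hb (n + 1)) (S.pw_eff hb n) ih
      _ = S.pw b (n + 1) := (S.pw_succ b n).symm

lemma pw_antitone {b : V} (hb : S.Eff b) : Antitone (S.pw b) :=
  antitone_nat_of_succ_le (S.pw_succ_le hb)

/-! ### Convergence of antitone sequences of effects -/

lemma eff_norm_le {a : V} (ha : S.Eff a) : ‖a‖ ≤ 1 := by
  refine S.norm_le_of_nonneg zero_le_one (S.eff_def ha).1 ?_
  rw [one_smul]
  exact (S.eff_def ha).2

lemma exists_lim [FiniteDimensional ℝ V] {x : ℕ → V} (hx : ∀ n, S.Eff (x n)) (hdec : Antitone x) :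
    ∃ l, Tendsto x atTop (𝓝 l) := by
  have hbdd : ∀ n, x n ∈ Metric.closedBall (0 : V) 1 := fun n => by
    simpa [Metric.mem_closedBall, dist_zero_right] using S.eff_norm_le (hx n)
  obtain ⟨l, -, φ, hφ, hlim⟩ := tendsto_subseq_of_bounded Metric.isBounded_closedBall hbdd
  have key : ∀ {c : V} {ψ : ℕ → ℕ}, Tendsto ψ atTop atTop →
      Tendsto (fun k => x (ψ k)) atTop (𝓝 c) → ∀ m, c ≤ x m := by
    intro c ψ hψ hc m
    exact S.ge_of_tendsto'' hc ((hψ.eventually_ge_atTop m).mono fun k hk => hdec hk)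
  have hll : ∀ m, l ≤ x m := key hφ.tendsto_atTop hlim
  refine ⟨l, Filter.tendsto_of_subseq_tendsto ?_⟩
  intro ns hns
  obtain ⟨c, -, ms, hms, hclim⟩ :=
    tendsto_subseq_of_bounded Metric.isBounded_closedBall (fun k => hbdd (ns k))
  have hcl : ∀ m, c ≤ x m := key (hns.comp hms.tendsto_atTop) hclim
  have h1 : c ≤ l := S.le_of_tendsto'' hlim (Eventually.of_forall fun j => hcl (φ j))
  have h2 : l ≤ c := S.le_of_tendsto'' hclim (Eventually.of_forall fun j => hll (ns (ms j)))
  refine ⟨ms, ?_⟩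
  have : c = l := le_antisymm h1 h2
  rw [← this]
  exact hclim

/-! ### Existence of floors and ceilings -/

theorem exists_floor [FiniteDimensional ℝ V] {b : V} (hb : S.Eff b) : ∃ f, S.IsFloor b f := by
  obtain ⟨l, hl⟩ := S.exists_lim (S.pw_eff hb) (S.pw_antitone hb)
  have hle : ∀ n, l ≤ S.pw b n := by
    intro n
    refine S.ge_of_tendsto'' hl (eventually_atTop.2 ⟨n, fun m hm => S.pw_antitone hb hm⟩)
  have h0l : 0 ≤ l :=
    S.le_of_tendsto'' hl (Eventually.of_forall fun n => (S.eff_def (S.pw_eff hb n)).1)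
  have hlb : l ≤ b := hle 0
  have hEl : S.Eff l := S.eff_of h0l (hlb.trans (S.eff_def hb).2)
  have hsq : S.seq l l = l := by
    have hsm : StrictMono (fun n : ℕ => 2 * n + 1) := fun a b h => by
      change 2 * a + 1 < 2 * b + 1; omega
    have h2n : Tendsto (fun n => S.pw b (2 * n + 1)) atTop (𝓝 l) := hl.comp hsm.tendsto_atTop
    have heq : ∀ n, S.seq (S.pw b n) (S.pw b n) = S.pw b (2 * n + 1) := fun n => by
      rw [S.pw_add hb n n]
      congr 1
      omega
    have t2 : Tendsto (fun n => S.seq (S.pw b n) l) atTop (𝓝 (S.seq l l)) := by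
      have hcont : Tendsto (fun a => S.seq a l) (nhdsWithin l {a : V | S.Eff a})
          (𝓝 (S.seq l l)) := S.s2 l hEl l hEl
      exact hcont.comp
        (tendsto_nhdsWithin_iff.mpr ⟨hl, Eventually.of_forall fun n => S.pw_eff hb n⟩)
    have t1 : Tendsto (fun n => S.seq (S.pw b n) (S.pw b n - l)) atTop (𝓝 0) := by
      rw [Metric.tendsto_atTop]
      intro ε hε
      obtain ⟨k, hk⟩ := exists_pow_lt_of_lt_one hε (by norm_num : (2 : ℝ)⁻¹ < 1)
      obtain ⟨N, hN⟩ := Metric.tendsto_atTop.1 hl (((2 : ℝ)⁻¹) ^ k / 2) (by positivity)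
      refine ⟨N, fun n hn => ?_⟩
      have hnl : ‖S.pw b n - l‖ < ((2 : ℝ)⁻¹) ^ k / 2 := by
        have := hN n hn; rwa [dist_eq_norm] at this
      have heffd : S.Eff (S.pw b n - l) := S.eff_sub_of_le h0l (S.pw_eff hb n) (hle n)
      have hsmall : S.pw b n - l ≤ ((2 : ℝ)⁻¹) ^ k • S.unit := by
        have h2 := (S.le_norm_smul (a := S.pw b n - l)
          (show (0 : ℝ) < ((2 : ℝ)⁻¹) ^ k / 2 from by positivity)).2
        exact h2.trans (S.smul_unit_mono (by linarith))
      have hle2 := S.seq_small (S.pw_eff hb n) heffd k hsmall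
      have hge := S.seq_nonneg (S.pw_eff hb n) heffd
      have hnorm : ‖S.seq (S.pw b n) (S.pw b n - l)‖ ≤ ((2 : ℝ)⁻¹) ^ k :=
        S.norm_le_of_nonneg (by positivity) hge hle2
      rw [dist_zero_right]
      exact lt_of_le_of_lt hnorm hk
    have hdecomp : ∀ n, S.seq (S.pw b n) (S.pw b n)
        = S.seq (S.pw b n) (S.pw b n - l) + S.seq (S.pw b n) l := fun n => by
      have e : S.pw b n - l + l = S.pw b n := by abel
      have h := S.s1 (S.pw b n) (S.pw b n - l) l (S.pw_eff hb n)
        (S.eff_sub_of_le h0l (S.pw_eff hb n) (hle n)) hEl (by rw [e]; exact S.pw_eff hb n)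
      rw [e] at h
      exact h
    have tsum : Tendsto (fun n => S.seq (S.pw b n) (S.pw b n)) atTop (𝓝 (0 + S.seq l l)) := by
      have := t1.add t2
      exact this.congr fun n => (hdecomp n).symm
    rw [zero_add] at tsum
    have tother : Tendsto (fun n => S.seq (S.pw b n) (S.pw b n)) atTop (𝓝 l) :=
      h2n.congr fun n => (heq n).symm
    exact tendsto_nhds_unique tsum tother
  refine ⟨l, ⟨hEl, hsq⟩, hlb, ?_⟩
  intro d hd hdb
  have hdn : ∀ n, d ≤ S.pw b n := by
    intro n
    induction n with
    | zero => exact hdb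
    | succ n ih =>
      have habs := (S.seq_absorb hd hb hdb).1
      calc d = S.seq b d := habs.symm
        _ ≤ S.seq b (S.pw b n) := S.seq_mono hb hd.1 (S.pw_eff hb n) ih
        _ = S.pw b (n + 1) := (S.pw_succ b n).symm
  exact S.le_of_tendsto'' hl (Eventually.of_forall hdn)

theorem exists_ceil [FiniteDimensional ℝ V] {a : V} (ha : S.Eff a) : ∃ c, S.IsCeil a c := by
  obtain ⟨f, hf, hfa, hmax⟩ := S.exists_floor (S.eff_sub ha)
  refine ⟨S.unit - f, S.sharp_compl hf, ?_, ?_⟩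
  · rw [S.le_iff']
    have e : S.unit - f - a = S.unit - a - f := by abel
    rw [e]
    exact (S.le_iff').1 hfa
  · intro d hd had
    have h1 : S.unit - d ≤ S.unit - a := by
      rw [S.le_iff']
      have e : S.unit - a - (S.unit - d) = d - a := by abel
      rw [e]
      exact (S.le_iff').1 had
    have h2 : S.unit - d ≤ f := hmax _ (S.sharp_compl hd) h1
    exact (S.sub_le_comm').1 h2

end SPS

/-- the sharp effects form a lattice, with join `p ∨ q = ⌈(p+q)/2⌉` and
meet `p ∧ q = 1 - ((1-p) ∨ (1-q))`. -/
theorem sharp_lattice {V : Type*} [NormedAddCommGroup V] [NormedSpace ℝ V]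
    [PartialOrder V] [FiniteDimensional ℝ V] (S : SPS V) (p q : V)
    (hp : S.SharpI p) (hq : S.SharpI q) :
    (∃ j : V, S.IsCeil ((2⁻¹ : ℝ) • (p + q)) j ∧
      p ≤ j ∧ q ≤ j ∧ ∀ r : V, S.SharpI r → p ≤ r → q ≤ r → j ≤ r) ∧
    (∃ j' : V, S.IsCeil ((2⁻¹ : ℝ) • ((S.unit - p) + (S.unit - q))) j' ∧
      S.SharpI (S.unit - j') ∧ S.unit - j' ≤ p ∧ S.unit - j' ≤ q ∧
      ∀ r : V, S.SharpI r → r ≤ p → r ≤ q → r ≤ S.unit - j') := by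
  have hEp : S.Eff p := hp.1
  have hEq : S.Eff q := hq.1
  constructor
  · obtain ⟨j, hj⟩ := S.exists_ceil (S.eff_half_add hEp hEq)
    refine ⟨j, hj, ?_, ?_, ?_⟩
    · exact S.le_sharp_of_half_add_le hj.1 hEp hEq hj.2.1
    · apply S.le_sharp_of_half_add_le hj.1 hEq hEp
      rw [add_comm q p]; exact hj.2.1
    · intro r hr hpr hqr
      apply hj.2.2 r hr
      have h1 : p + q ≤ r + r := S.add_le_add'' hpr hqr
      have h2 := S.smul_le_smul' (2⁻¹ : ℝ) _ _ (by norm_num) h1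
      have e : (2⁻¹ : ℝ) • (r + r) = r := by module
      rwa [e] at h2
  · obtain ⟨j', hj'⟩ := S.exists_ceil (S.eff_half_add (S.eff_sub hEp) (S.eff_sub hEq))
    refine ⟨j', hj', S.sharp_compl hj'.1, ?_, ?_, ?_⟩
    · exact (S.sub_le_comm').mpr
        (S.le_sharp_of_half_add_le hj'.1 (S.eff_sub hEp) (S.eff_sub hEq) hj'.2.1)
    · refine (S.sub_le_comm').mpr ?_
      apply S.le_sharp_of_half_add_le hj'.1 (S.eff_sub hEq) (S.eff_sub hEp)
      rw [add_comm (S.unit - q) (S.unit - p)]; exact hj'.2.1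
    · intro r hr hrp hrq
      have h1 : j' ≤ S.unit - r := by
        apply hj'.2.2 _ (S.sharp_compl hr)
        have e1 : S.unit - p ≤ S.unit - r := by
          rw [S.le_iff']
          have e : (S.unit - r) - (S.unit - p) = p - r := by abel
          rw [e]; exact (S.le_iff').1 hrp
        have e2 : S.unit - q ≤ S.unit - r := by
          rw [S.le_iff']
          have e : (S.unit - r) - (S.unit - q) = q - r := by abel
          rw [e]; exact (S.le_iff').1 hrq
        have h3 := S.add_le_add'' e1 e2
        have h4 := S.smul_le_smul' (2⁻¹ : ℝ) _ _ (by norm_num) h3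
        have e : (2⁻¹ : ℝ) • ((S.unit - r) + (S.unit - r)) = S.unit - r := by module
        rwa [e] at h4
      rw [S.le_iff']
      have e : (S.unit - j') - r = (S.unit - r) - j' := by abel
      rw [e]
      exact (S.le_iff').1 h1
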